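/- Let d, n, p ∈ ℕ, β ∈ ℕ A_{d,n} with deg β ≥ p+2, and r ∈ {1,...,n+1}. Suppose η = ⟨a^1,...,a^t⟩ ∗ C is a UFO_{t,p+1}^r in Δ_β (so a^1,...,a^t are distinct vertices with (a^1+⋯+a^t)_r = β_r and (a^j)_r > 0 for all j, and C is a (p−t)-cycle in Δ_{β − a^1 − ⋯ − a^t}). If C = ∂σ for a single simplex σ with p+2−t vertices in Δ_{β − a^1 − ⋯ − a^t}, then there exists a p-chain η̃ in Δ_{β − e_r} with ∂η̃ = ∂η. -/
import Mathlib


open Finset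

/-- `A_{d,n}`: the exponent vectors of the degree-`d` monomials in `n+1` variables,
i.e. `{x ∈ ℕ^{n+1} : Σ_i x_i = d}`. -/
def Adn (d n : ℕ) : Set (Fin (n + 1) → ℕ) :=
  {x | ∑ i, x i = d}

/-- `F` is a face of the simplicial complex `Δ_v` on the vertex set `A_{d,n}`:
all vertices of `F` lie in `A_{d,n}` and the coordinatewise sum of the vertices of `F`
is at most `v`. -/
def IsFace (d n : ℕ) (v : Fin (n + 1) → ℕ) (F : Finset (Fin (n + 1) → ℕ)) : Prop :=
  ↑F ⊆ Adn d n ∧ ∀ i, ∑ a ∈ F, a i ≤ v i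

/-- (Ordered) simplicial `k`-chains with complex coefficients on the vertex set
`ℕ^{n+1} ⊇ A_{d,n}`: formal `ℂ`-linear combinations of `(k+1)`-tuples of vertices. -/
abbrev PChain (n k : ℕ) : Type :=
  (Fin (k + 1) → (Fin (n + 1) → ℕ)) →₀ ℂ

/-- The simplicial boundary operator on ordered chains. -/
noncomputable def bdry {n k : ℕ} (c : PChain n (k + 1)) : PChain n k :=
  c.sum fun σ a =>
    ∑ i : Fin (k + 2), ((-1 : ℂ) ^ (i : ℕ) * a) • Finsupp.single (σ ∘ i.succAbove) 1

/-- The augmentation (sum of coefficients) of a chain. -/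
noncomputable def aug {n k : ℕ} (c : PChain n k) : ℂ :=
  c.sum fun _ a => a

/-- (Reduced) cycles: in positive degree, chains with vanishing boundary; in degree `0`,
chains with vanishing augmentation. -/
def IsCycle {n : ℕ} : ∀ {k : ℕ}, PChain n k → Prop
  | 0, c => aug c = 0
  | _ + 1, c => bdry c = 0

/-- The chain `c` is supported on the simplicial complex `Δ_v`. -/
def ChainIn (d n : ℕ) (v : Fin (n + 1) → ℕ) {k : ℕ} (c : PChain n k) : Prop :=
  ∀ σ ∈ c.support, IsFace d n v (Finset.image σ Finset.univ)

/-- Vanishing of the `k`-th reduced (simplicial) homology of `Δ_v` with `ℂ`-coefficients: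
every supported `k`-cycle is the boundary of a supported `(k+1)`-chain. -/
def Hvanish (d n k : ℕ) (v : Fin (n + 1) → ℕ) : Prop :=
  ∀ c : PChain n k, ChainIn d n v c → IsCycle c →
    ∃ η : PChain n (k + 1), ChainIn d n v η ∧ bdry η = c

/-- The `r`-th standard basis vector `e_r` of `ℕ^m`. -/
def ee {m : ℕ} (r : Fin m) : Fin m → ℕ := fun i => if i = r then 1 else 0

/-- Join of a chain with a vertex: `a ∗ c`. -/
noncomputable def vjoin {n k : ℕ} (a : Fin (n + 1) → ℕ) (c : PChain n k) :
    PChain n (k + 1) :=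
  c.sum fun τ b => b • Finsupp.single (Fin.cons a τ) 1

/-- Join of two chains, `c₁ ∗ c₂` (with the appropriate sign conventions). -/
noncomputable def joinChain {n s t : ℕ} (c₁ : PChain n s) (c₂ : PChain n t) :
    PChain n (s + t + 1) :=
  ((-1 : ℂ) ^ (s * (s + 1) / 2)) •
    c₁.sum fun σ a => c₂.sum fun τ b =>
      (a * b) • Finsupp.single
        (fun i : Fin (s + t + 1 + 1) =>
          Fin.append σ τ (Fin.cast (show s + t + 1 + 1 = (s + 1) + (t + 1) by omega) i)) 1

/-- Reindexing of chains along an equality of dimensions. -/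
noncomputable def castChain {n k k' : ℕ} (h : k = k') (c : PChain n k) : PChain n k' :=
  Finsupp.mapDomain (fun σ => σ ∘ Fin.cast (show k' + 1 = k + 1 by omega)) c

/-- The chain `c` is supported on the union complex
`X_b = Δ_b ∪ Δ_{b−e₁+e₂} ∪ ⋯ ∪ Δ_{b−b₁e₁+b₁e₂}` (coordinates `e₁, e₂` are the
first two coordinates, i.e. indices `0, 1`). -/
def ChainInX (d n : ℕ) (b : Fin (n + 1) → ℕ) {k : ℕ} (c : PChain n k) : Prop :=
  ∀ σ ∈ c.support, ∃ j ≤ b 0,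
    IsFace d n (fun i => if i = 0 then b 0 - j else if i = 1 then b 1 + j else b i)
      (Finset.image σ Finset.univ)



/-- Remove the `i`-th entry of a tuple. -/
def del {q : ℕ} {V : Type*} (τ : Fin (q+1) → V) (i : ℕ) : Fin q → V :=
  fun x => if (x : ℕ) < i then τ x.castSucc else τ x.succ

lemma comp_succAbove_eq_del {q : ℕ} {V : Type*} (τ : Fin (q+1) → V) (p : Fin (q+1)) :
    τ ∘ p.succAbove = del τ (p : ℕ) := by
  funext x
  simp only [del, Fin.succAbove, Fin.lt_def, Function.comp_apply, Fin.coe_castSucc]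
  split_ifs <;> rfl

lemma del_del {q : ℕ} {V : Type*} (τ : Fin (q+2) → V) {i k : ℕ} (h : i ≤ k) :
    del (del τ i) k = del (del τ (k+1)) i := by
  funext x
  simp only [del, Fin.coe_castSucc, Fin.val_succ]
  split_ifs <;>
    first
      | rfl
      | (exact congrArg τ (Fin.ext (by simp [Fin.coe_castSucc, Fin.val_succ]; omega)))
      | omega

lemma append_eval {p q : ℕ} {V : Type*} (u : Fin p → V) (v : Fin q → V) (y : Fin (p+q)) :
    Fin.append u v y = if h : (y : ℕ) < p then u ⟨y, h⟩ else v ⟨(y:ℕ) - p, by omega⟩ := by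
  induction y using Fin.addCases with
  | left i => simp [Fin.append_left]
  | right i =>
    simp only [Fin.append_right, Fin.coe_natAdd]
    rw [dif_neg (by omega)]
    congr 1
    exact Fin.ext (by simp)

lemma del_append_left {p q N : ℕ} {V : Type*} (h : N + 1 = (p+1)+q) (h2 : N = p + q)
    (u : Fin (p+1) → V) (v : Fin q → V) (k : ℕ) (hk : k ≤ p) :
    del (fun x : Fin (N+1) => Fin.append u v (Fin.cast h x)) k
    = fun x : Fin N => Fin.append (del u k) v (Fin.cast h2 x) := by
  funext x
  simp only [del, append_eval, Fin.coe_cast, Fin.coe_castSucc, Fin.val_succ]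
  split_ifs <;>
    first
      | omega
      | rfl
      | (congr 1; exact Fin.ext (by simp only [Fin.coe_castSucc, Fin.val_succ, Fin.coe_cast]; omega))

lemma del_append_right {p q N : ℕ} {V : Type*} (h : N + 1 = p+(q+1)) (h2 : N = p + q)
    (u : Fin p → V) (v : Fin (q+1) → V) (k : ℕ) (hk : p ≤ k) :
    del (fun x : Fin (N+1) => Fin.append u v (Fin.cast h x)) k
    = fun x : Fin N => Fin.append u (del v (k-p)) (Fin.cast h2 x) := by
  funext x
  simp only [del, append_eval, Fin.coe_cast, Fin.coe_castSucc, Fin.val_succ]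
  split_ifs <;>
    first
      | omega
      | rfl
      | (congr 1; exact Fin.ext (by simp only [Fin.coe_castSucc, Fin.val_succ, Fin.coe_cast]; omega))

lemma cancel {q : ℕ} {V β : Type*} (τ : Fin (q+2) → V) (F : (Fin q → V) → β) :
    ∑ i ∈ Finset.range (q+2), ∑ k ∈ Finset.range (q+1),
      ((-1:ℂ)^(i+k)) • Finsupp.single (F (del (del τ i) k)) (1:ℂ) = 0 := by
  rw [← Finset.sum_product']
  refine Finset.sum_involution
    (fun p _ => if p.2 < p.1 then (p.2, p.1 - 1) else (p.2 + 1, p.1)) ?_ ?_ ?_ ?_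
  · rintro ⟨i, k⟩ hp
    simp only [Finset.mem_product, Finset.mem_range] at hp
    by_cases h : k < i
    · simp only [if_pos h]
      rw [del_del (τ := τ) (i := k) (k := i - 1) (by omega)]
      have hi : i - 1 + 1 = i := by omega
      rw [hi]
      have hs : (-1:ℂ)^(k + (i-1)) = -(-1:ℂ)^(i+k) := by
        have : i + k = (k + (i-1)) + 1 := by omega
        rw [this, pow_succ]; ring
      rw [hs, neg_smul, add_neg_cancel]
    · simp only [if_neg h]
      rw [del_del (τ := τ) (i := i) (k := k) (by omega)]
      have hs : (-1:ℂ)^(k + 1 + i) = -(-1:ℂ)^(i+k) := by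
        have : k + 1 + i = (i+k) + 1 := by omega
        rw [this, pow_succ]; ring
      rw [hs, neg_smul, add_neg_cancel]
  · rintro ⟨i, k⟩ hp hf
    by_cases h : k < i <;> simp [h] <;> omega
  · rintro ⟨i, k⟩ hp
    simp only [Finset.mem_product, Finset.mem_range] at hp ⊢
    by_cases h : k < i <;> simp [h] <;> omega
  · rintro ⟨i, k⟩ hp
    simp only [Finset.mem_product, Finset.mem_range] at hp
    by_cases h : k < i
    · simp only [if_pos h]
      rw [if_neg (by omega)]
      simp only [Prod.mk.injEq]
      exact ⟨by omega, trivial⟩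
    · simp only [if_neg h]
      rw [if_pos (by omega)]
      simp only [Prod.mk.injEq]
      exact ⟨trivial, by omega⟩

-- === helpers appended separately ===
noncomputable def bdryL (n k : ℕ) : PChain n (k+1) →ₗ[ℂ] PChain n k :=
  Finsupp.lsum ℂ fun σ => LinearMap.toSpanSingleton ℂ _
    (∑ i ∈ Finset.range (k+2), ((-1:ℂ)^i) • Finsupp.single (del σ i) (1:ℂ))

lemma bdry_eq_bdryL {n k : ℕ} (c : PChain n (k+1)) : bdry c = bdryL n k c := by
  rw [bdry, bdryL, Finsupp.lsum_apply]
  refine Finsupp.sum_congr fun σ _ => ?_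
  rw [LinearMap.toSpanSingleton_apply, Finset.smul_sum]
  calc ∑ i : Fin (k+2), ((-1:ℂ)^(i:ℕ) * c σ) • Finsupp.single (σ ∘ i.succAbove) (1:ℂ)
      = ∑ i : Fin (k+2), c σ • (((-1:ℂ)^(i:ℕ)) • Finsupp.single (del σ (i:ℕ)) (1:ℂ)) :=
        Finset.sum_congr rfl fun i _ => by rw [comp_succAbove_eq_del, smul_smul, mul_comm]
    _ = ∑ m ∈ Finset.range (k+2), c σ • (((-1:ℂ)^m) • Finsupp.single (del σ m) (1:ℂ)) :=
        Fin.sum_univ_eq_sum_range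
          (fun m => c σ • (((-1:ℂ)^m) • Finsupp.single (del σ m) (1:ℂ))) (k+2)

lemma bdry_single {n k : ℕ} (τ : Fin (k+2) → (Fin (n+1) → ℕ)) :
    bdry (Finsupp.single τ (1:ℂ))
      = ∑ i ∈ Finset.range (k+2), ((-1:ℂ)^i) • Finsupp.single (del τ i) (1:ℂ) := by
  rw [bdry_eq_bdryL, bdryL, Finsupp.lsum_apply,
    Finsupp.sum_single_index (by rw [map_zero]), LinearMap.toSpanSingleton_apply, one_smul]

noncomputable def JLmap (n t' s : ℕ) (a : Fin (t'+1) → (Fin (n+1) → ℕ)) :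
    PChain n s →ₗ[ℂ] PChain n (t'+s+1) :=
  Finsupp.lsum ℂ fun τ => LinearMap.toSpanSingleton ℂ _
    (Finsupp.single (fun x : Fin (t'+s+1+1) => Fin.append a τ
      (Fin.cast (by omega) x)) (1:ℂ))

lemma JLmap_single (n t' s : ℕ) (a : Fin (t'+1) → (Fin (n+1) → ℕ))
    (τ : Fin (s+1) → (Fin (n+1) → ℕ)) :
    JLmap n t' s a (Finsupp.single τ (1:ℂ))
      = Finsupp.single (fun x : Fin (t'+s+1+1) => Fin.append a τ
          (Fin.cast (by omega) x)) (1:ℂ) := by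
  rw [JLmap, Finsupp.lsum_apply, Finsupp.sum_single_index (by rw [map_zero]),
    LinearMap.toSpanSingleton_apply, one_smul]

lemma joinChain_single_eq (n t' s : ℕ) (a : Fin (t'+1) → (Fin (n+1) → ℕ))
    (c₂ : PChain n s) :
    joinChain (Finsupp.single a (1:ℂ)) c₂
      = ((-1:ℂ)^(t'*(t'+1)/2)) • JLmap n t' s a c₂ := by
  rw [joinChain]
  congr 1
  rw [Finsupp.sum_single_index (by simp)]
  rw [JLmap, Finsupp.lsum_apply]
  refine Finsupp.sum_congr fun τ _ => ?_
  rw [LinearMap.toSpanSingleton_apply, one_mul]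

lemma comb (S1 S2 : Finset ℕ) {α : Type*} [AddCommGroup α] [Module ℂ α] (X : ℕ → ℕ → α) :
    ∑ j ∈ S1, ((-1:ℂ)^j) • ∑ l ∈ S2, ((-1:ℂ)^l) • X j l
      = ∑ j ∈ S1, ∑ l ∈ S2, ((-1:ℂ)^(j+l)) • X j l := by
  refine Finset.sum_congr rfl fun j _ => ?_
  rw [Finset.smul_sum]
  exact Finset.sum_congr rfl fun l _ => by rw [smul_smul, ← pow_add]

lemma bdry_smul_sum (n k : ℕ) (c : ℂ) (S : Finset ℕ) (g : ℕ → ℂ)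
    (f : ℕ → (Fin (k+2) → (Fin (n+1) → ℕ))) :
    bdry (c • ∑ j ∈ S, g j • Finsupp.single (f j) (1:ℂ))
    = c • ∑ j ∈ S, g j • ∑ i ∈ Finset.range (k+2), ((-1:ℂ)^i) •
        Finsupp.single (del (f j) i) (1:ℂ) := by
  rw [bdry_eq_bdryL, map_smul, map_sum]
  congr 1
  refine Finset.sum_congr rfl fun j _ => ?_
  rw [map_smul, ← bdry_eq_bdryL, bdry_single]

lemma pure_vanish (n t' s : ℕ) (a : Fin (t'+1) → (Fin (n+1) → ℕ))
    (σs : Fin (s+2) → (Fin (n+1) → ℕ)) :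
    ∑ j ∈ Finset.range (t'+1), ∑ l ∈ Finset.range t',
      ((-1:ℂ)^(j+l)) • Finsupp.single (del (fun x : Fin (t'+s+1+1) =>
        Fin.append (del a j) σs (Fin.cast (by omega) x)) l) (1:ℂ) = (0 : PChain n (t'+s)) := by
  rcases t' with _ | m
  · simp
  · refine Eq.trans
      (Finset.sum_congr rfl fun j _ => Finset.sum_congr rfl fun l hl => ?_)
      (cancel a (fun υ : Fin m → (Fin (n+1) → ℕ) =>
        fun x : Fin (m+1+s+1) => Fin.append υ σs (Fin.cast (by omega) x)))
    rw [Finset.mem_range] at hl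
    rw [del_append_left (by omega) (by omega) (del a j) σs l (by omega)]

lemma eta'_bdry (n t' s : ℕ) (a : Fin (t'+1) → (Fin (n+1) → ℕ))
    (σs : Fin (s+2) → (Fin (n+1) → ℕ)) :
    bdry (((-1:ℂ)^(t' + t'*(t'+1)/2)) • ∑ j ∈ Finset.range (t'+1), ((-1:ℂ)^j) •
        Finsupp.single (fun x : Fin (t'+s+1+1) =>
          Fin.append (del a j) σs (Fin.cast (by omega) x)) (1:ℂ))
    = ((-1:ℂ)^(t'*(t'+1)/2)) • ∑ j ∈ Finset.range (t'+1), ∑ x ∈ Finset.range (s+2),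
        ((-1:ℂ)^(j+x)) • Finsupp.single (fun y : Fin (t'+s+1) =>
          Fin.append (del a j) (del σs x) (Fin.cast (by omega) y)) (1:ℂ) := by
  rw [bdry_smul_sum n (t'+s) _ (Finset.range (t'+1)) _
    (fun j => fun x : Fin (t'+s+1+1) => Fin.append (del a j) σs (Fin.cast (by omega) x)),
    comb]
  have hsplit : ∀ g : ℕ → PChain n (t'+s),
      (∑ l ∈ Finset.range (t'+s+2), g l)
        = ∑ l ∈ Finset.range t', g l + ∑ x ∈ Finset.range (s+2), g (t'+x) := by
    intro g
    have h := Finset.sum_range_add g t' (s+2)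
    rw [show t' + (s+2) = t'+s+2 from by omega] at h
    exact h
  rw [Finset.sum_congr rfl (fun j _ => hsplit _), Finset.sum_add_distrib,
    pure_vanish n t' s a σs, zero_add]
  have hterm : ∀ j ∈ Finset.range (t'+1), ∀ x ∈ Finset.range (s+2),
      ((-1:ℂ)^(j+(t'+x))) • Finsupp.single (del (fun y : Fin (t'+s+1+1) =>
          Fin.append (del a j) σs (Fin.cast (by omega) y)) (t'+x)) (1:ℂ)
      = ((-1:ℂ)^t') • (((-1:ℂ)^(j+x)) • Finsupp.single (fun y : Fin (t'+s+1) =>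
          Fin.append (del a j) (del σs x) (Fin.cast (by omega) y)) (1:ℂ)) := by
    intro j hj x hx
    rw [del_append_right (by omega) (by omega) (del a j) σs (t'+x) (by omega),
      show t'+x-t' = x from by omega,
      smul_smul, ← pow_add, show t'+(j+x) = j+(t'+x) from by omega]
  rw [Finset.sum_congr rfl fun j hj => Finset.sum_congr rfl fun x hx => hterm j hj x hx]
  rw [Finset.sum_congr rfl fun j (_ : j ∈ Finset.range (t'+1)) =>
    (Finset.smul_sum (r := ((-1:ℂ)^t'))).symm, ← Finset.smul_sum, smul_smul, ← pow_add]
  congr 1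
  rw [show t' + t'*(t'+1)/2 + t' = t'*(t'+1)/2 + 2*t' from by omega, pow_add, pow_mul,
    neg_one_sq, one_pow, mul_one]

lemma eta_expand (n t' s : ℕ) (a : Fin (t'+1) → (Fin (n+1) → ℕ))
    (σs : Fin (s+2) → (Fin (n+1) → ℕ)) :
    joinChain (Finsupp.single a (1:ℂ)) (bdry (Finsupp.single σs (1:ℂ)))
      = ((-1:ℂ)^(t'*(t'+1)/2)) • ∑ i ∈ Finset.range (s+2), ((-1:ℂ)^i) •
          Finsupp.single (fun x : Fin (t'+s+1+1) => Fin.append a (del σs i)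
            (Fin.cast (by omega) x)) (1:ℂ) := by
  rw [joinChain_single_eq, bdry_single, map_sum]
  congr 1
  refine Finset.sum_congr rfl fun i _ => ?_
  rw [map_smul, JLmap_single]

lemma eta_bdry (n t' s : ℕ) (a : Fin (t'+1) → (Fin (n+1) → ℕ))
    (σs : Fin (s+2) → (Fin (n+1) → ℕ)) :
    bdry (joinChain (Finsupp.single a (1:ℂ)) (bdry (Finsupp.single σs (1:ℂ))))
    = ((-1:ℂ)^(t'*(t'+1)/2)) • ∑ i ∈ Finset.range (s+2), ∑ k ∈ Finset.range (t'+1),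
        ((-1:ℂ)^(i+k)) • Finsupp.single (fun y : Fin (t'+s+1) =>
          Fin.append (del a k) (del σs i) (Fin.cast (by omega) y)) (1:ℂ) := by
  rw [eta_expand n t' s a σs,
    bdry_smul_sum n (t'+s) _ (Finset.range (s+2)) _
      (fun i => fun x : Fin (t'+s+1+1) => Fin.append a (del σs i) (Fin.cast (by omega) x)),
    comb]
  have hsplit : ∀ g : ℕ → PChain n (t'+s),
      (∑ l ∈ Finset.range (t'+s+2), g l)
        = ∑ l ∈ Finset.range (t'+1), g l + ∑ x ∈ Finset.range (s+1), g (t'+1+x) := by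
    intro g
    have h := Finset.sum_range_add g (t'+1) (s+1)
    rw [show t'+1 + (s+1) = t'+s+2 from by omega] at h
    exact h
  rw [Finset.sum_congr rfl (fun i _ => hsplit _), Finset.sum_add_distrib]
  have hmix : ∀ i ∈ Finset.range (s+2), ∀ k ∈ Finset.range (t'+1),
      ((-1:ℂ)^(i+k)) • Finsupp.single (del (fun y : Fin (t'+s+1+1) =>
          Fin.append a (del σs i) (Fin.cast (by omega) y)) k) (1:ℂ)
      = ((-1:ℂ)^(i+k)) • Finsupp.single (fun y : Fin (t'+s+1) =>
          Fin.append (del a k) (del σs i) (Fin.cast (by omega) y)) (1:ℂ) := by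
    intro i hi k hk
    rw [Finset.mem_range] at hk
    rw [del_append_left (by omega) (by omega) a (del σs i) k (by omega)]
  have hpure : ∀ i ∈ Finset.range (s+2), ∀ x ∈ Finset.range (s+1),
      ((-1:ℂ)^(i+(t'+1+x))) • Finsupp.single (del (fun y : Fin (t'+s+1+1) =>
          Fin.append a (del σs i) (Fin.cast (by omega) y)) (t'+1+x)) (1:ℂ)
      = ((-1:ℂ)^(t'+1)) • (((-1:ℂ)^(i+x)) • Finsupp.single
          ((fun υ : Fin s → (Fin (n+1) → ℕ) => fun y : Fin (t'+s+1) =>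
            Fin.append a υ (Fin.cast (by omega) y)) (del (del σs i) x)) (1:ℂ)) := by
    intro i hi x hx
    rw [del_append_right (by omega) (by omega) a (del σs i) (t'+1+x) (by omega),
      show t'+1+x-(t'+1) = x from by omega,
      smul_smul, ← pow_add, show t'+1+(i+x) = i+(t'+1+x) from by omega]
  rw [Finset.sum_congr rfl fun i hi => Finset.sum_congr rfl fun x hx => hpure i hi x hx]
  rw [Finset.sum_congr rfl fun i (_ : i ∈ Finset.range (s+2)) =>
    (Finset.smul_sum (r := ((-1:ℂ)^(t'+1)))).symm, ← Finset.smul_sum]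
  rw [cancel σs (fun υ : Fin s → (Fin (n+1) → ℕ) => fun y : Fin (t'+s+1) =>
    Fin.append a υ (Fin.cast (by omega) y)), smul_zero, add_zero]
  rw [Finset.sum_congr rfl fun i hi => Finset.sum_congr rfl fun k hk => hmix i hi k hk]

lemma bdry_eta (n t' s : ℕ) (a : Fin (t'+1) → (Fin (n+1) → ℕ))
    (σs : Fin (s+2) → (Fin (n+1) → ℕ)) :
    bdry (((-1:ℂ)^(t' + t'*(t'+1)/2)) • ∑ j ∈ Finset.range (t'+1), ((-1:ℂ)^j) •
        Finsupp.single (fun x : Fin (t'+s+1+1) =>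
          Fin.append (del a j) σs (Fin.cast (by omega) x)) (1:ℂ))
    = bdry (joinChain (Finsupp.single a (1:ℂ)) (bdry (Finsupp.single σs (1:ℂ)))) := by
  rw [eta'_bdry, eta_bdry]
  congr 1
  rw [Finset.sum_comm]
  refine Finset.sum_congr rfl fun j _ => Finset.sum_congr rfl fun x _ => ?_
  rw [Nat.add_comm j x]

lemma sum_union_le' {α : Type*} [DecidableEq α] (A B : Finset α) (f : α → ℕ) :
    ∑ y ∈ A ∪ B, f y ≤ ∑ y ∈ A, f y + ∑ y ∈ B, f y := by
  have h := Finset.sum_union_inter (s₁ := A) (s₂ := B) (f := f)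
  exact le_trans (Nat.le_add_right _ _) (le_of_eq h)

lemma arith (X1 X3 X4 X5 X6 X7 aj βi e : ℕ)
    (hA : X1 ≤ X3 + X4) (hB : X3 ≤ X5) (hC : X5 + aj = X6) (hD : X6 = X7)
    (hE : X4 ≤ βi - X7) (hF : X7 ≤ βi) (hG : aj ≤ X7) (hH : e ≤ aj) (hI : e ≤ 1)
    (hr : e = 1 → X7 = βi) : X1 ≤ βi - e := by omega

lemma support_subset (n k : ℕ) (cc : ℂ) (S : Finset ℕ) (g : ℕ → ℂ)
    (f : ℕ → (Fin (k+1) → (Fin (n+1) → ℕ))) (τ : Fin (k+1) → (Fin (n+1) → ℕ))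
    (hτ : τ ∈ (cc • ∑ j ∈ S, g j • Finsupp.single (f j) (1:ℂ) : PChain n k).support) :
    ∃ j ∈ S, f j = τ := by
  by_contra hno
  push_neg at hno
  apply Finsupp.mem_support_iff.mp hτ
  rw [Finsupp.smul_apply, Finsupp.finset_sum_apply, Finset.sum_eq_zero, smul_zero]
  intro j hj
  rw [Finsupp.smul_apply, Finsupp.single_apply, if_neg (hno j hj), smul_zero]

theorem stmt8' (d n t' s : ℕ) (r : Fin (n + 1))
    (β : Fin (n + 1) → ℕ) (hβ : β ∈ AddSubmonoid.closure (Adn d n))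
    (hdeg : (t' + s + 3) * d ≤ ∑ i, β i)
    (a : Fin (t' + 1) → (Fin (n + 1) → ℕ)) (hainj : Function.Injective a)
    (haA : ∀ j, a j ∈ Adn d n)
    (har : ∑ j, a j r = β r) (hapos : ∀ j, 0 < a j r)
    (σs : Fin (s + 2) → (Fin (n + 1) → ℕ))
    (hσ : IsFace d n (fun i => β i - ∑ j, a j i) (Finset.image σs Finset.univ))
    (hη : ChainIn d n β
      (joinChain (Finsupp.single a (1 : ℂ)) (bdry (Finsupp.single σs (1 : ℂ))))) :
    ∃ η' : PChain n (t' + s + 1), ChainIn d n (β - ee r) η' ∧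
      bdry η' =
        bdry (joinChain (Finsupp.single a (1 : ℂ)) (bdry (Finsupp.single σs (1 : ℂ)))) := by
  classical
  by_cases hz : joinChain (Finsupp.single a (1:ℂ)) (bdry (Finsupp.single σs (1:ℂ))) = 0
  · refine ⟨0, fun τ hτ => by simp at hτ, by rw [hz]⟩
  · obtain ⟨τ₀, hτ₀⟩ := Finsupp.support_nonempty_iff.mpr hz
    have hface := hη τ₀ hτ₀
    rw [eta_expand n t' s a σs] at hτ₀
    obtain ⟨i0, hi0, hJd⟩ := support_subset _ _ _ _ _ _ τ₀ hτ₀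
    have key : ∀ i, ∑ j, a j i ≤ β i := by
      intro i
      have h1 := hface.2 i
      have h2 : ∑ y ∈ Finset.image a Finset.univ, y i = ∑ j, a j i :=
        Finset.sum_image (fun x _ y _ h => hainj h)
      have h3 : Finset.image a Finset.univ ⊆ Finset.image τ₀ Finset.univ := by
        intro y hy
        simp only [Finset.mem_image, Finset.mem_univ, true_and] at hy ⊢
        obtain ⟨j, rfl⟩ := hy
        refine ⟨Fin.cast (show (t'+1)+(s+1) = t'+s+1+1 by clear * - ; omega) (Fin.castAdd (s+1) j), ?_⟩
        rw [← hJd]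
        simp only [append_eval, Fin.coe_cast, Fin.coe_castAdd]
        rw [dif_pos j.isLt]
      rw [← h2]
      exact le_trans (Finset.sum_le_sum_of_subset h3) h1
    refine ⟨((-1:ℂ)^(t' + t'*(t'+1)/2)) • ∑ j ∈ Finset.range (t'+1), ((-1:ℂ)^j) •
        Finsupp.single (fun x : Fin (t'+s+1+1) =>
          Fin.append (del a j) σs (Fin.cast (by omega) x)) (1:ℂ),
      ?_, bdry_eta n t' s a σs⟩
    intro τ hτ
    obtain ⟨j, hjS, hTj⟩ := support_subset _ _ _ _ _ _ τ hτ
    rw [Finset.mem_range] at hjS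
    subst hTj
    constructor
    · intro y hy
      simp only [Finset.coe_image, Set.mem_image, Finset.mem_coe, Finset.mem_univ,
        Set.mem_setOf_eq, Finset.coe_univ, Set.image_univ, Set.mem_range] at hy
      obtain ⟨x, rfl⟩ := hy
      simp only [append_eval]
      split_ifs with h
      · simp only [del]
        split_ifs <;> exact haA _
      · exact hσ.1 (Finset.mem_coe.mpr (Finset.mem_image_of_mem σs (Finset.mem_univ _)))
    · intro i
      have h1 : Finset.image (fun x : Fin (t'+s+1+1) =>
          Fin.append (del a j) σs (Fin.cast (by omega) x)) Finset.univ
          ⊆ Finset.image (del a j) Finset.univ ∪ Finset.image σs Finset.univ := by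
        intro y hy
        simp only [Finset.mem_image, Finset.mem_univ, true_and, Finset.mem_union] at hy ⊢
        obtain ⟨x, rfl⟩ := hy
        simp only [append_eval]
        split_ifs
        · exact Or.inl ⟨_, rfl⟩
        · exact Or.inr ⟨_, rfl⟩
      have h5 : Finset.image (del a j) Finset.univ
          ⊆ (Finset.image a Finset.univ).erase (a ⟨j, hjS⟩) := by
        intro y hy
        simp only [Finset.mem_image, Finset.mem_univ, true_and] at hy
        obtain ⟨z, rfl⟩ := hy
        rw [Finset.mem_erase]
        constructor
        · simp only [del]
          split_ifs with h
          · intro hEq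
            have := congrArg Fin.val (hainj hEq)
            simp only [Fin.coe_castSucc] at this
            omega
          · intro hEq
            have := congrArg Fin.val (hainj hEq)
            simp only [Fin.val_succ] at this
            omega
        · simp only [del]
          split_ifs <;> exact Finset.mem_image_of_mem a (Finset.mem_univ _)
      have h6 := Finset.sum_erase_add (Finset.image a Finset.univ) (fun y => y i)
        (Finset.mem_image_of_mem a (Finset.mem_univ (⟨j, hjS⟩ : Fin (t'+1))))
      have h7 : ∑ y ∈ Finset.image a Finset.univ, y i = ∑ j', a j' i :=
        Finset.sum_image (fun x _ y _ h => hainj h)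
      have h8 := hσ.2 i
      have h9 : a ⟨j, hjS⟩ i ≤ ∑ j', a j' i :=
        Finset.single_le_sum (f := fun j' => a j' i) (fun _ _ => Nat.zero_le _)
          (Finset.mem_univ _)
      have h11 := Finset.sum_le_sum_of_subset (f := fun y => y i) h1
      have h12 := Finset.sum_le_sum_of_subset (f := fun y => y i) h5
      have hee : (β - ee r) i = β i - (if i = r then 1 else 0) := rfl
      rw [hee]
      exact arith _ _ _ _ _ _ _ _ _
        (le_trans h11 (sum_union_le' _ _ _)) h12 h6 h7 (hσ.2 i) (key i) h9
        (by split_ifs with hir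
            · subst hir; exact hapos _
            · exact Nat.zero_le _)
        (by split_ifs
            exacts [le_refl 1, Nat.zero_le 1])
        (by intro hE1
            by_cases hir : i = r
            · subst hir; exact har
            · rw [if_neg hir] at hE1
              exact absurd hE1 (by decide))

/-- Lemma 12 of the paper.  Let `β ∈ ℕA_{d,n}` with `deg β ≥ p+2` and let
`η = ⟨a¹,…,aᵗ⟩ ∗ C` be a `UFO_{t,p+1}^r` in `Δ_β` (here `t = t'+1 ≥ 1` and
`p = t'+s+1`, so `C` is a `(p−t)`-cycle):  the `aʲ` are distinct vertices with
`(a¹+⋯+aᵗ)_r = β_r` and `(aʲ)_r > 0` for all `j`.  If `C = ∂σ` for a single simplex `σ`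
with `p+2−t` vertices in `Δ_{β−a¹−⋯−aᵗ}`, then there is a `p`-chain `η̃` in `Δ_{β−e_r}`
with `∂η̃ = ∂η`. -/
theorem stmt8 (d n t' s : ℕ) (r : Fin (n + 1))
    (β : Fin (n + 1) → ℕ) (hβ : β ∈ AddSubmonoid.closure (Adn d n))
    (hdeg : (t' + s + 3) * d ≤ ∑ i, β i)
    (a : Fin (t' + 1) → (Fin (n + 1) → ℕ)) (hainj : Function.Injective a)
    (haA : ∀ j, a j ∈ Adn d n)
    (har : ∑ j, a j r = β r) (hapos : ∀ j, 0 < a j r)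
    (σs : Fin (s + 2) → (Fin (n + 1) → ℕ))
    (hσ : IsFace d n (fun i => β i - ∑ j, a j i) (Finset.image σs Finset.univ))
    (hη : ChainIn d n β
      (joinChain (Finsupp.single a (1 : ℂ)) (bdry (Finsupp.single σs (1 : ℂ))))) :
    ∃ η' : PChain n (t' + s + 1), ChainIn d n (β - ee r) η' ∧
      bdry η' =
        bdry (joinChain (Finsupp.single a (1 : ℂ)) (bdry (Finsupp.single σs (1 : ℂ)))) := by
  exact stmt8' d n t' s r β hβ hdeg a hainj haA har hapos σs hσ hη
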